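/- arXiv:2107.03732 — 2 statements merged into one kernel-verified Lean document; each statement's English description precedes it below -/
import Mathlib

section
/- Let β ≥ 0, u ∈ 𝒮(ℝ²), 0 < λ < 1, γ > 0, ω ∈ ℝ, and u_λ(x) = λ^ω u(λ^γ x). Then ‖u_λ‖_{Ḣ^{11/4}(ln H)^{-β}} ≤ 2 λ^ω λ^{(7/4)γ} (1 + 2|ln(λ^γ)|)^β ‖u‖_{Ḣ^{11/4}(ln H)^{-β}}. -/
open MeasureTheory FourierTransform RealInnerProductSpace Module SchwartzMap

/-!
The Fourier transform of `x ↦ r • u (c • x)` on a `d`-dimensional space is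
`ξ ↦ r c⁻ᵈ û (c⁻¹ ξ)`, so the substitution `ξ = c η` turns the squared norm into
`r² c⁻ᵈ ∫ w (c η) |û η|² dη`, where `w ξ = |ξ|^{2s} (1 + |ln |ξ||)^{-2β}`.
Since `1 + |ln t| ≤ (1 + |ln c|)(1 + |ln (c t)|)`, the weight obeys
`w (c η) ≤ c^{2s} (1 + |ln c|)^{2β} w η`, whence the norm of the dilate is at most
`|r| c^{s - d/2} (1 + |ln c|)^β` times that of `u`; here `d = 2` and `s = 11/4`.
-/

theorem Real.one_add_abs_log_le_mul {c : ℝ} (hc : c ≠ 0) (t : ℝ) :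
    1 + |log t| ≤ (1 + |log c|) * (1 + |log (c * t)|) := by
  rcases eq_or_ne t 0 with rfl | ht
  · simp
  have htri : |log t| ≤ |log c| + |log (c * t)| := by
    rw [log_mul hc ht]
    calc |log t| = |-log c + (log c + log t)| := by ring_nf
      _ ≤ _ := by simpa using abs_add_le (-log c) (log c + log t)
  nlinarith [abs_nonneg (log c), abs_nonneg (log (c * t))]

theorem Real.rpow_le_pow_natCeil_add_one {x p : ℝ} (hx : 0 ≤ x) (hp : 0 ≤ p) :
    x ^ p ≤ x ^ ⌈p⌉₊ + 1 := by
  rcases le_total x 1 with hx1 | hx1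
  · linarith [rpow_le_one hx hx1 hp, pow_nonneg hx ⌈p⌉₊]
  · calc x ^ p ≤ x ^ (⌈p⌉₊ : ℝ) := rpow_le_rpow_of_exponent_le hx1 (Nat.le_ceil p)
      _ ≤ x ^ ⌈p⌉₊ + 1 := by rw [rpow_natCast]; linarith

theorem SchwartzMap.integrable_rpow_mul_norm_sq {V E : Type*} [NormedAddCommGroup V]
    [NormedSpace ℝ V] [MeasurableSpace V] [BorelSpace V] [SecondCountableTopology V]
    [NormedAddCommGroup E] [NormedSpace ℝ E] {μ : Measure V} [μ.HasTemperateGrowth]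
    (f : 𝓢(V, E)) {p : ℝ} (hp : 0 ≤ p) :
    Integrable (fun x => ‖x‖ ^ p * ‖f x‖ ^ 2) μ := by
  set M := SchwartzMap.seminorm ℝ 0 0 f
  refine (((f.integrable_pow_mul μ ⌈p⌉₊).add f.integrable.norm).const_mul M).mono' ?_
    (ae_of_all _ fun x => ?_)
  · exact ((continuous_norm.rpow_const (fun _ => Or.inr hp)).mul
      (f.continuous.norm.pow 2)).aestronglyMeasurable
  · have hfx := f.norm_le_seminorm ℝ x
    have hxp := Real.rpow_le_pow_natCeil_add_one (norm_nonneg x) hp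
    rw [Real.norm_of_nonneg (by positivity)]
    calc ‖x‖ ^ p * ‖f x‖ ^ 2 ≤ (‖x‖ ^ ⌈p⌉₊ + 1) * ‖f x‖ * M := by
          rw [sq, ← mul_assoc]; gcongr
      _ = M * (‖x‖ ^ ⌈p⌉₊ * ‖f x‖ + ‖f x‖) := by ring

section LogSobolevWeight

variable {V : Type*} [NormedAddCommGroup V]

noncomputable def logSobolevWeight (s β : ℝ) (ξ : V) : ℝ :=
  ‖ξ‖ ^ (2 * s) / (1 + |Real.log ‖ξ‖|) ^ (2 * β)

theorem logSobolevWeight_nonneg (s β : ℝ) (ξ : V) : 0 ≤ logSobolevWeight s β ξ := by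
  unfold logSobolevWeight; positivity

theorem logSobolevWeight_le {β : ℝ} (hβ : 0 ≤ β) (s : ℝ) (ξ : V) :
    logSobolevWeight s β ξ ≤ ‖ξ‖ ^ (2 * s) :=
  div_le_self (by positivity) (Real.one_le_rpow (by simp) (by positivity))

theorem measurable_logSobolevWeight [MeasurableSpace V] [BorelSpace V] (s β : ℝ) :
    Measurable (logSobolevWeight (V := V) s β) := by
  unfold logSobolevWeight
  fun_prop

theorem logSobolevWeight_smul_le [NormedSpace ℝ V] {β : ℝ} (hβ : 0 ≤ β) (s : ℝ) {c : ℝ}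
    (hc : 0 < c) (ξ : V) :
    logSobolevWeight s β (c • ξ) ≤
      c ^ (2 * s) * (1 + |Real.log c|) ^ (2 * β) * logSobolevWeight s β ξ := by
  have hlog : (1 + |Real.log ‖ξ‖|) ^ (2 * β) ≤
      (1 + |Real.log c|) ^ (2 * β) * (1 + |Real.log (c * ‖ξ‖)|) ^ (2 * β) := by
    rw [← Real.mul_rpow (by positivity) (by positivity)]
    gcongr
    exact Real.one_add_abs_log_le_mul hc.ne' _
  unfold logSobolevWeight
  rw [norm_smul, Real.norm_of_nonneg hc.le, Real.mul_rpow hc.le (norm_nonneg ξ)]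
  calc c ^ (2 * s) * ‖ξ‖ ^ (2 * s) / (1 + |Real.log (c * ‖ξ‖)|) ^ (2 * β)
      = c ^ (2 * s) * ‖ξ‖ ^ (2 * s) /
          ((1 + |Real.log c|) ^ (2 * β) * (1 + |Real.log (c * ‖ξ‖)|) ^ (2 * β)) *
          (1 + |Real.log c|) ^ (2 * β) := by field_simp
    _ ≤ c ^ (2 * s) * ‖ξ‖ ^ (2 * s) / (1 + |Real.log ‖ξ‖|) ^ (2 * β) *
          (1 + |Real.log c|) ^ (2 * β) := by gcongr
    _ = _ := by ring

end LogSobolevWeight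

theorem SchwartzMap.integrable_logSobolevWeight_mul_norm_sq {V E : Type*} [NormedAddCommGroup V]
    [NormedSpace ℝ V] [MeasurableSpace V] [BorelSpace V] [SecondCountableTopology V]
    [NormedAddCommGroup E] [NormedSpace ℝ E] {μ : Measure V} [μ.HasTemperateGrowth]
    (f : 𝓢(V, E)) {s β : ℝ} (hs : 0 ≤ s) (hβ : 0 ≤ β) :
    Integrable (fun ξ => logSobolevWeight s β ξ * ‖f ξ‖ ^ 2) μ := by
  have hmeas := (measurable_logSobolevWeight s β).mul (f.continuous.norm.pow 2).measurable
  refine (f.integrable_rpow_mul_norm_sq (μ := μ) (by positivity : 0 ≤ 2 * s)).mono'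
    hmeas.aestronglyMeasurable (ae_of_all _ fun ξ => ?_)
  rw [Real.norm_of_nonneg (by have := logSobolevWeight_nonneg s β ξ; positivity)]
  gcongr
  exact logSobolevWeight_le hβ s ξ

section Fourier

variable {V E : Type*} [NormedAddCommGroup V] [InnerProductSpace ℝ V] [FiniteDimensional ℝ V]
  [MeasurableSpace V] [BorelSpace V] [NormedAddCommGroup E] [NormedSpace ℂ E]

theorem Real.fourier_const_smul (r : ℝ) (f : V → E) (ξ : V) :
    𝓕 (fun x => r • f x) ξ = r • 𝓕 f ξ := by
  simp only [Real.fourier_eq, ← integral_smul, smul_comm r]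

theorem Real.fourier_comp_smul (f : V → E) {c : ℝ} (hc : c ≠ 0) (ξ : V) :
    𝓕 (fun x => f (c • x)) ξ = (|c| ^ finrank ℝ V)⁻¹ • 𝓕 f (c⁻¹ • ξ) := by
  have key : ∀ x : V, ⟪x, ξ⟫ = ⟪c • x, c⁻¹ • ξ⟫ := fun x => by
    rw [real_inner_smul_left, real_inner_smul_right, ← mul_assoc, mul_inv_cancel₀ hc, one_mul]
  simp only [Real.fourier_eq, key]
  rw [Measure.integral_comp_smul volume (fun y : V => 𝐞 (-⟪y, c⁻¹ • ξ⟫) • f y), abs_inv, abs_pow]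

end Fourier

section LogSobolevNorm

variable {V E : Type*} [NormedAddCommGroup V] [InnerProductSpace ℝ V] [FiniteDimensional ℝ V]
  [MeasurableSpace V] [BorelSpace V] [NormedAddCommGroup E] [NormedSpace ℂ E]

theorem integral_mul_norm_fourier_dilate_sq (w : V → ℝ) (f : V → E) (r : ℝ) {c : ℝ}
    (hc : 0 < c) :
    ∫ ξ, w ξ * ‖𝓕 (fun x => r • f (c • x)) ξ‖ ^ 2 =
      r ^ 2 / c ^ finrank ℝ V * ∫ η, w (c • η) * ‖𝓕 f η‖ ^ 2 := by
  set G : V → ℝ := fun η => w (c • η) * ‖𝓕 f η‖ ^ 2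
  have hpoint : ∀ ξ, w ξ * ‖𝓕 (fun x => r • f (c • x)) ξ‖ ^ 2 =
      r ^ 2 / c ^ (2 * finrank ℝ V) * G (c⁻¹ • ξ) := fun ξ => by
    rw [Real.fourier_const_smul, Real.fourier_comp_smul _ hc.ne', smul_smul, norm_smul,
      Real.norm_eq_abs, abs_mul, abs_inv, abs_pow, abs_abs, abs_of_pos hc, mul_pow, mul_pow, sq_abs]
    simp only [G, smul_inv_smul₀ hc.ne']
    field_simp
    ring
  rw [funext hpoint, integral_const_mul, Measure.integral_comp_inv_smul_of_nonneg volume _ hc.le,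
    smul_eq_mul]
  field_simp
  ring

/-- The norm `‖f‖_{Ḣ^s (ln H)^{-β}}`. -/
noncomputable def logSobolevNorm (s β : ℝ) (f : V → E) : ℝ :=
  √(∫ ξ, logSobolevWeight s β ξ * ‖𝓕 f ξ‖ ^ 2)

theorem logSobolevNorm_dilate_le {s β : ℝ} (hs : 0 ≤ s) (hβ : 0 ≤ β) (u : 𝓢(V, E)) (r : ℝ)
    {c : ℝ} (hc : 0 < c) :
    logSobolevNorm s β (fun x => r • u (c • x)) ≤
      |r| * c ^ (s - finrank ℝ V / 2) * (1 + |Real.log c|) ^ β * logSobolevNorm s β u := by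
  set L := 1 + |Real.log c|
  set K := |r| * c ^ (s - finrank ℝ V / 2) * L ^ β
  have hK : K ^ 2 = r ^ 2 / c ^ finrank ℝ V * (c ^ (2 * s) * L ^ (2 * β)) := by
    have hc2 : (c ^ (s - finrank ℝ V / 2)) ^ 2 = c ^ (2 * s) / c ^ finrank ℝ V := by
      rw [← Real.rpow_natCast _ 2, ← Real.rpow_mul hc.le, ← Real.rpow_natCast c,
        ← Real.rpow_sub hc]
      ring_nf
    have hL2 : (L ^ β) ^ 2 = L ^ (2 * β) := by
      rw [← Real.rpow_natCast _ 2, ← Real.rpow_mul (by positivity)]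
      ring_nf
    rw [mul_pow, mul_pow, sq_abs, hc2, hL2]
    ring
  have hint : Integrable fun η => logSobolevWeight s β η * ‖𝓕 (u : V → E) η‖ ^ 2 :=
    (𝓕 u).integrable_logSobolevWeight_mul_norm_sq hs hβ
  unfold logSobolevNorm
  rw [integral_mul_norm_fourier_dilate_sq _ _ _ hc, ← Real.sqrt_sq (by positivity : 0 ≤ K),
    ← Real.sqrt_mul (sq_nonneg K), hK, mul_assoc]
  gcongr
  rw [← integral_const_mul]
  refine integral_mono_of_nonneg (ae_of_all _ fun η => ?_) (hint.const_mul _)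
    (ae_of_all _ fun η => ?_)
  · have := logSobolevWeight_nonneg s β (c • η)
    positivity
  · dsimp only
    rw [← mul_assoc]
    gcongr
    exact logSobolevWeight_smul_le hβ s hc η

end LogSobolevNorm

theorem logSobolev_scaling_general
    (β : ℝ) (hβ : 0 ≤ β)
    (u : SchwartzMap (EuclideanSpace ℝ (Fin 2)) ℂ)
    (l ω γ : ℝ) (hl0 : 0 < l) :
    Real.sqrt (∫ ξ : EuclideanSpace ℝ (Fin 2),
        ‖ξ‖ ^ (2 * (11 / 4 : ℝ)) / (1 + |Real.log ‖ξ‖|) ^ (2 * β) *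
        ‖FourierTransform.fourier (fun x => (l ^ ω : ℝ) • u (l ^ γ • x)) ξ‖ ^ 2) ≤
      2 * l ^ ω * l ^ ((7 / 4) * γ) * (1 + 2 * |Real.log (l ^ γ)|) ^ β *
        Real.sqrt (∫ ξ : EuclideanSpace ℝ (Fin 2),
          ‖ξ‖ ^ (2 * (11 / 4 : ℝ)) / (1 + |Real.log ‖ξ‖|) ^ (2 * β) *
          ‖FourierTransform.fourier (fun x => u x) ξ‖ ^ 2) := by
  have hc : 0 < l ^ γ := Real.rpow_pos_of_pos hl0 γ
  have hr : 0 < l ^ ω := Real.rpow_pos_of_pos hl0 ω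
  have hexp : (l ^ γ) ^ (11 / 4 - (finrank ℝ (EuclideanSpace ℝ (Fin 2)) : ℝ) / 2) =
      l ^ ((7 / 4) * γ) := by
    rw [finrank_euclideanSpace_fin, ← Real.rpow_mul hl0.le]
    norm_num [mul_comm]
  calc logSobolevNorm (11 / 4) β (fun x => (l ^ ω : ℝ) • u (l ^ γ • x))
      ≤ |l ^ ω| * (l ^ γ) ^ (11 / 4 - (finrank ℝ (EuclideanSpace ℝ (Fin 2)) : ℝ) / 2) *
          (1 + |Real.log (l ^ γ)|) ^ β * logSobolevNorm (11 / 4) β u :=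
        logSobolevNorm_dilate_le (by norm_num) hβ u _ hc
    _ = 1 * l ^ ω * l ^ ((7 / 4) * γ) * (1 + |Real.log (l ^ γ)|) ^ β *
          logSobolevNorm (11 / 4) β u := by
        rw [abs_of_pos hr, hexp, one_mul]
    _ ≤ 2 * l ^ ω * l ^ ((7 / 4) * γ) * (1 + 2 * |Real.log (l ^ γ)|) ^ β *
          logSobolevNorm (11 / 4) β u := by
        gcongr
        · exact Real.sqrt_nonneg _
        · norm_num
        · linarith [abs_nonneg (Real.log (l ^ γ))]

/-- Scaling of the logarithmically modified `Ḣ^{11/4}(ln H)^{-β}` norm: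
`‖u_λ‖ ≤ 2 λ^ω λ^{(7/4)γ} (1 + 2|ln λ^γ|)^β ‖u‖`. -/
theorem logSobolev_scaling
    (β : ℝ) (hβ : 0 ≤ β)
    (u : SchwartzMap (EuclideanSpace ℝ (Fin 2)) ℂ)
    (l ω γ : ℝ) (hl0 : 0 < l) (hl1 : l < 1) (hγ : 0 < γ) :
    Real.sqrt (∫ ξ : EuclideanSpace ℝ (Fin 2),
        ‖ξ‖ ^ (2 * (11 / 4 : ℝ)) / (1 + |Real.log ‖ξ‖|) ^ (2 * β) *
        ‖FourierTransform.fourier (fun x => (l ^ ω : ℝ) • u (l ^ γ • x)) ξ‖ ^ 2) ≤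
      2 * l ^ ω * l ^ ((7 / 4) * γ) * (1 + 2 * |Real.log (l ^ γ)|) ^ β *
        Real.sqrt (∫ ξ : EuclideanSpace ℝ (Fin 2),
          ‖ξ‖ ^ (2 * (11 / 4 : ℝ)) / (1 + |Real.log ‖ξ‖|) ^ (2 * β) *
          ‖FourierTransform.fourier (fun x => u x) ξ‖ ^ 2) :=
  logSobolev_scaling_general β hβ u l ω γ hl0
end

section
/- For κ > 0, λ ∈ [0, 1/12), and a = t_ε - t ∈ (0,1), the integral ∫₀^{κ/2} a·r^{5/2+2λ}/((2r)² + a)^{11/2-2λ} dr is bounded below by c·a^{-11/4+3λ} for a constant c > 0 depending only on κ and λ, for all sufficiently small a. -/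
open intervalIntegral

/-- Key divergence estimate: for `κ > 0` and `0 ≤ λ < 1/12`, the integral
`∫₀^{κ/2} a r^{5/2+2λ}/((2r)² + a)^{11/2-2λ} dr` is bounded below by
`c · a^{-11/4+3λ}` for all sufficiently small `a ∈ (0,1)`. -/
theorem divergence_rate_lower_bound
    (κ lam : ℝ) (hκ : 0 < κ) (hlam0 : 0 ≤ lam) (hlam : lam < 1 / 12) :
    ∃ c > 0, ∃ a₀ > 0, ∀ a : ℝ, 0 < a → a < a₀ → a < 1 →
      c * a ^ (-(11 / 4) + 3 * lam) ≤
        ∫ r in (0 : ℝ)..(κ / 2),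
          a * r ^ (5 / 2 + 2 * lam) / ((2 * r) ^ 2 + a) ^ (11 / 2 - 2 * lam) := by
  set p : ℝ := 5 / 2 + 2 * lam with hp
  set q : ℝ := 11 / 2 - 2 * lam with hq
  have hp0 : 0 < p := by simp only [hp]; linarith
  have hq0 : 0 < q := by simp only [hq]; linarith
  refine ⟨(1/2 : ℝ) ^ p * (5:ℝ) ^ (-q) * (1/2), by positivity, min 1 ((κ/2)^2), by positivity, ?_⟩
  intro a ha ha0 _
  have ha2 : a < (κ/2)^2 := lt_of_lt_of_le ha0 (min_le_right _ _)
  set s := Real.sqrt a with hsdef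
  have hs0 : 0 < s := Real.sqrt_pos.mpr ha
  have hs2 : s ^ 2 = a := Real.sq_sqrt ha.le
  have hsκ : s < κ / 2 := (Real.sqrt_lt' (by linarith)).mpr ha2
  set f : ℝ → ℝ := fun r => a * r ^ p / ((2 * r) ^ 2 + a) ^ q with hf
  have hden : ∀ r : ℝ, (0:ℝ) < (2 * r) ^ 2 + a := fun r => by positivity
  have hcont : Continuous f := by
    have h1 : Continuous fun r : ℝ => r ^ p := by
      rw [continuous_iff_continuousAt]
      exact fun x => Real.continuousAt_rpow_const x p (Or.inr hp0.le)
    have h2 : Continuous fun r : ℝ => ((2 * r) ^ 2 + a) ^ q := by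
      rw [continuous_iff_continuousAt]
      intro x
      exact (((continuous_const.mul continuous_id).pow 2).add continuous_const).continuousAt.rpow_const
        (Or.inl (hden x).ne')
    exact (continuous_const.mul h1).div h2 fun x => (Real.rpow_pos_of_pos (hden x) q).ne'
  have hint : IntervalIntegrable f MeasureTheory.volume 0 (κ/2) := hcont.intervalIntegrable _ _
  have hsub : ∫ r in (s/2)..s, f r ≤ ∫ r in (0:ℝ)..(κ/2), f r := by
    apply intervalIntegral.integral_mono_interval (by positivity) (by linarith) (le_of_lt hsκ) ?_ hint
    filter_upwards [MeasureTheory.ae_restrict_mem measurableSet_Ioc] with r hr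
    have hr0 : 0 < r := hr.1
    have : (0:ℝ) ≤ a * r ^ p := mul_nonneg ha.le (Real.rpow_nonneg hr0.le _)
    exact div_nonneg this (Real.rpow_nonneg (hden r).le _)
  set m : ℝ := a * (s/2) ^ p / (5 * a) ^ q with hm
  have hlow : m * (s - s/2) ≤ ∫ r in (s/2)..s, f r := by
    have hmono : ∀ r ∈ Set.Icc (s/2) s, m ≤ f r := by
      intro r hr
      have hr1 : s/2 ≤ r := hr.1
      have hr2 : r ≤ s := hr.2
      have hr0 : 0 < r := lt_of_lt_of_le (by linarith) hr1
      have hnum : a * (s/2) ^ p ≤ a * r ^ p :=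
        mul_le_mul_of_nonneg_left (Real.rpow_le_rpow (by positivity) hr1 hp0.le) ha.le
      have hdle : ((2 * r) ^ 2 + a) ^ q ≤ (5 * a) ^ q := by
        apply Real.rpow_le_rpow (hden r).le _ hq0.le
        nlinarith
      exact div_le_div₀ (mul_nonneg ha.le (Real.rpow_nonneg hr0.le _)) hnum
        (Real.rpow_pos_of_pos (hden r) q) hdle
    have := intervalIntegral.integral_mono_on (by linarith : s/2 ≤ s)
      (intervalIntegrable_const (μ := MeasureTheory.volume)) (hcont.intervalIntegrable _ _) hmono
    rwa [intervalIntegral.integral_const, smul_eq_mul, mul_comm] at this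
  have hs12 : s = a ^ (1/2 : ℝ) := Real.sqrt_eq_rpow a
  have heq : m * (s - s/2) = ((1/2 : ℝ) ^ p * (5:ℝ) ^ (-q) * (1/2)) * a ^ (-(11/4) + 3 * lam) := by
    have e1 : s - s/2 = a ^ (1/2:ℝ) * (1/2) := by rw [hs12]; ring
    have e2 : (s/2 : ℝ) = a ^ (1/2:ℝ) * (1/2) := by rw [hs12]; ring
    have e3 : ((5:ℝ) * a) ^ q = (5:ℝ) ^ q * a ^ q := Real.mul_rpow (by norm_num) ha.le
    have e4 : (a ^ (1/2:ℝ) * (1/2)) ^ p = a ^ ((1/2:ℝ) * p) * (1/2:ℝ) ^ p := by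
      rw [Real.mul_rpow (by positivity) (by norm_num)]
      rw [← Real.rpow_mul ha.le]
    rw [hm, e1, e2, e3, e4, div_eq_mul_inv, mul_inv, ← Real.rpow_neg (by norm_num : (0:ℝ) ≤ 5),
      ← Real.rpow_neg ha.le]
    have : a * (a ^ ((1/2:ℝ) * p) * (1/2:ℝ) ^ p) * ((5:ℝ) ^ (-q) * a ^ (-q)) * (a ^ (1/2:ℝ) * (1/2))
        = ((1/2:ℝ) ^ p * (5:ℝ) ^ (-q) * (1/2)) * (a ^ (1:ℝ) * a ^ ((1/2:ℝ)*p) * a ^ (-q) * a ^ (1/2:ℝ)) := by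
      rw [Real.rpow_one]; ring
    rw [this, ← Real.rpow_add ha, ← Real.rpow_add ha, ← Real.rpow_add ha]
    congr 1
    simp only [hp, hq]
    ring
  calc ((1/2 : ℝ) ^ p * (5:ℝ) ^ (-q) * (1/2)) * a ^ (-(11/4) + 3 * lam)
      = m * (s - s/2) := heq.symm
    _ ≤ ∫ r in (s/2)..s, f r := hlow
    _ ≤ ∫ r in (0:ℝ)..(κ/2), f r := hsub
end
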